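/- arXiv:2602.13929 — 6 statements merged into one kernel-verified Lean document; each statement's English description precedes it below -/
import Mathlib

section
/- Let E be a complex normed vector space, ⟦·,·⟧ : E × E → E a continuous bilinear antisymmetric map, and A : E → E a continuous linear map. Suppose u0, z ∈ E and real constants λ, α, ζ satisfy ⟦u0, A u0⟧ = 0, A z = α z, ⟦z, A u0⟧ = −i·λ·α·z, and ⟦u0, z⟧ = i·ζ·z. Then the curve U : ℝ → E defined by U(t) = u0 + exp(i(λ−ζ)t)·z is differentiable and satisfies (d/dt)(A(U(t))) + ⟦U(t), A(U(t))⟧ = 0 for all t ∈ ℝ. -/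
/-- The complex-valued part of Theorem 2.3 in abstract form.
`B` is a continuous bilinear antisymmetric map (the abstract commutator),
`A` is a continuous linear map (the abstract inertia operator).
Under the simultaneous eigenvalue hypotheses, the curve
`U t = u0 + exp(i(λ-ζ)t) • z` is differentiable and satisfies
`(d/dt)(A (U t)) + ⟦U t, A (U t)⟧ = 0`. -/
theorem statement0 {E : Type*} [NormedAddCommGroup E] [NormedSpace ℂ E]
    (B : E →L[ℂ] E →L[ℂ] E) (hB : ∀ x y : E, B x y = -B y x)
    (A : E →L[ℂ] E) (u0 z : E) (lam alpha zeta : ℝ)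
    (h1 : B u0 (A u0) = 0)
    (h2 : A z = (alpha : ℂ) • z)
    (h3 : B z (A u0) = (-Complex.I * (lam : ℂ) * (alpha : ℂ)) • z)
    (h4 : B u0 z = (Complex.I * (zeta : ℂ)) • z) :
    (∀ t : ℝ, DifferentiableAt ℝ
        (fun s : ℝ => u0 + Complex.exp (Complex.I * ((lam : ℂ) - (zeta : ℂ)) * (s : ℂ)) • z) t) ∧
    (∀ t : ℝ,
      HasDerivAt
        (fun s : ℝ =>
          A (u0 + Complex.exp (Complex.I * ((lam : ℂ) - (zeta : ℂ)) * (s : ℂ)) • z))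
        (-(B (u0 + Complex.exp (Complex.I * ((lam : ℂ) - (zeta : ℂ)) * (t : ℂ)) • z)
            (A (u0 + Complex.exp (Complex.I * ((lam : ℂ) - (zeta : ℂ)) * (t : ℂ)) • z)))) t) := by
  set c : ℂ := Complex.I * ((lam : ℂ) - (zeta : ℂ)) with hc
  have hBzz : B z z = 0 := by
    have := hB z z
    have h := add_eq_zero_iff_eq_neg.mpr this
    linear_combination (norm := module) (2:ℂ)⁻¹ • h
  -- derivative of the exponential factor
  have hexp : ∀ t : ℝ, HasDerivAt (fun s : ℝ => Complex.exp (c * (s : ℂ)))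
      (c * Complex.exp (c * (t : ℂ))) t := by
    intro t
    have h1' : HasDerivAt (fun w : ℂ => Complex.exp (c * w))
        (Complex.exp (c * (t : ℂ)) * c) (t : ℂ) := by
      simpa using ((hasDerivAt_id (t : ℂ)).const_mul c).cexp
    simpa [mul_comm] using h1'.comp_ofReal
  have hU : ∀ t : ℝ, HasDerivAt (fun s : ℝ => u0 + Complex.exp (c * (s : ℂ)) • z)
      ((c * Complex.exp (c * (t : ℂ))) • z) t := by
    intro t
    simpa using ((hexp t).smul_const z).const_add u0
  constructor
  · intro t; exact (hU t).differentiableAt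
  · intro t
    have hAU : HasDerivAt (fun s : ℝ => A (u0 + Complex.exp (c * (s : ℂ)) • z))
        ((c * Complex.exp (c * (t : ℂ))) • A z) t := by
      simpa only [Function.comp_def, ContinuousLinearMap.coe_restrictScalars',
        ContinuousLinearMap.map_smulₛₗ, map_add, RingHom.id_apply] using
        (((A.restrictScalars ℝ).hasFDerivAt
          (x := u0 + Complex.exp (c * (t:ℂ)) • z)).comp_hasDerivAt t (hU t))
    convert hAU using 1
    set e : ℂ := Complex.exp (c * (t : ℂ)) with he
    rw [map_add, map_smul, h2]
    simp only [map_add, map_smul, ContinuousLinearMap.add_apply, ContinuousLinearMap.smul_apply,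
      h1, h2, h3, h4, hBzz, smul_smul, smul_add, smul_zero, add_zero, zero_add]
    rw [hc]
    module
end

section
/- Let E be a real normed vector space, ⟦·,·⟧ : E × E → E a continuous bilinear antisymmetric map, and A : E → E a continuous linear map. Suppose u0, v, w ∈ E and real constants λ, α, ζ satisfy ⟦u0, A u0⟧ = 0, A v = α v, A w = α w, ⟦v, A u0⟧ = λ·α·w, ⟦w, A u0⟧ = −λ·α·v, ⟦u0, v⟧ = −ζ·w, and ⟦u0, w⟧ = ζ·v. Then the curve U_R : ℝ → E defined by U_R(t) = u0 + cos((λ−ζ)t)·v − sin((λ−ζ)t)·w satisfies (d/dt)(A(U_R(t))) + ⟦U_R(t), A(U_R(t))⟧ = 0 for all t ∈ ℝ. -/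
/-!
Write `c = cos((λ - ζ)t)` and `s = sin((λ - ζ)t)`. The eigen-relations and antisymmetry (which
forces `⟦v, v⟧ = ⟦w, w⟧ = 0`) give `⟦u0 + c v - s w, A(u0 + c v - s w)⟧ = α(λ - ζ)(s v + c w)`
for all real `c, s`, while `d/dt A U_R = α d/dt (c v - s w) = -α(λ - ζ)(s v + c w)`.
-/

theorem hasDerivAt_add_cos_smul_sub_sin_smul {E : Type*} [NormedAddCommGroup E]
    [NormedSpace ℝ E] (u v w : E) (k t : ℝ) :
    HasDerivAt (fun s : ℝ => u + Real.cos (k * s) • v - Real.sin (k * s) • w)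
      (-k • (Real.sin (k * t) • v + Real.cos (k * t) • w)) t := by
  have hcos := ((hasDerivAt_id' t).const_mul k).cos
  have hsin := ((hasDerivAt_id' t).const_mul k).sin
  refine (((hasDerivAt_const t u).add (hcos.smul_const v)).sub (hsin.smul_const w)).congr_deriv ?_
  module

theorem bracket_add_smul_sub_smul_of_eigen {E : Type*} [NormedAddCommGroup E] [NormedSpace ℝ E]
    (B : E →L[ℝ] E →L[ℝ] E) (hB : ∀ x y : E, B x y = -B y x)
    (A : E →L[ℝ] E) (u0 v w : E) (lam alpha zeta : ℝ)
    (h1 : B u0 (A u0) = 0)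
    (h2 : A v = alpha • v)
    (h3 : A w = alpha • w)
    (h4 : B v (A u0) = (lam * alpha) • w)
    (h5 : B w (A u0) = -((lam * alpha) • v))
    (h6 : B u0 v = -(zeta • w))
    (h7 : B u0 w = zeta • v) (c s : ℝ) :
    B (u0 + c • v - s • w) (A (u0 + c • v - s • w)) =
      (alpha * (lam - zeta)) • (s • v + c • w) := by
  have : IsAddTorsionFree E := .of_isTorsionFree ℝ E
  have hvv : B v v = 0 := self_eq_neg.mp (hB v v)
  have hww : B w w = 0 := self_eq_neg.mp (hB w w)
  simp only [map_add, map_sub, map_smul, add_apply, sub_apply, smul_apply,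
    h1, h2, h3, h4, h5, h6, h7, hvv, hww, hB w v]
  module

/-- The real-valued part of Theorem 2.3 in abstract form.
Under the real and imaginary parts of the simultaneous eigenvalue hypotheses,
the curve `U_R t = u0 + cos((λ-ζ)t) • v - sin((λ-ζ)t) • w` satisfies
`(d/dt)(A (U_R t)) + ⟦U_R t, A (U_R t)⟧ = 0`. -/
theorem statement1 {E : Type*} [NormedAddCommGroup E] [NormedSpace ℝ E]
    (B : E →L[ℝ] E →L[ℝ] E) (hB : ∀ x y : E, B x y = -B y x)
    (A : E →L[ℝ] E) (u0 v w : E) (lam alpha zeta : ℝ)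
    (h1 : B u0 (A u0) = 0)
    (h2 : A v = alpha • v)
    (h3 : A w = alpha • w)
    (h4 : B v (A u0) = (lam * alpha) • w)
    (h5 : B w (A u0) = -((lam * alpha) • v))
    (h6 : B u0 v = -(zeta • w))
    (h7 : B u0 w = zeta • v) :
    ∀ t : ℝ,
      HasDerivAt
        (fun s : ℝ =>
          A (u0 + Real.cos ((lam - zeta) * s) • v - Real.sin ((lam - zeta) * s) • w))
        (-(B (u0 + Real.cos ((lam - zeta) * t) • v - Real.sin ((lam - zeta) * t) • w)
            (A (u0 + Real.cos ((lam - zeta) * t) • v - Real.sin ((lam - zeta) * t) • w)))) t := by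
  intro t
  have hU := hasDerivAt_add_cos_smul_sub_sin_smul u0 v w (lam - zeta) t
  refine (A.hasFDerivAt.comp_hasDerivAt t hU).congr_deriv ?_
  rw [bracket_add_smul_sub_smul_of_eigen B hB A u0 v w lam alpha zeta h1 h2 h3 h4 h5 h6 h7,
    map_smul, map_add, map_smul, map_smul, h2, h3]
  module
end

section
/- Let E be a real normed vector space, ⟦·,·⟧ : E × E → E a continuous bilinear antisymmetric map, and A : E → E a continuous linear map. Suppose u0, v, w ∈ E and real constants λ, α, ζ satisfy ⟦u0, A u0⟧ = 0, A v = α v, A w = α w, ⟦v, A u0⟧ = λ·α·w, ⟦w, A u0⟧ = −λ·α·v, ⟦u0, v⟧ = −ζ·w, and ⟦u0, w⟧ = ζ·v. Define U_R(t) = u0 + cos((λ−ζ)t)·v − sin((λ−ζ)t)·w and U_I(t) = sin((λ−ζ)t)·v + cos((λ−ζ)t)·w. Then U_I satisfies the linearized equation (d/dt)(A(U_I(t))) + ⟦U_R(t), A(U_I(t))⟧ + ⟦U_I(t), A(U_R(t))⟧ = 0 for all t ∈ ℝ. -/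
/-!
Write `θ = λ - ζ`. At time `t` the curves are `U_R t = u0 + v_t` and `U_I t = w_t`, where
`(v_t, w_t)` is the pair `(v, w)` rotated by the angle `θ t`. The hypotheses on `(v, w)` are
invariant under such rotations, and `d/dt w_t = θ • v_t`, so it suffices to check the linearized
equation at `t = 0` for an arbitrary pair satisfying the hypotheses. There it is a short
computation: the two terms `α ⟦v, w⟧` coming from `⟦v, A w⟧` and `⟦w, A v⟧` cancel by
antisymmetry, and what remains is `(ζ - λ) α v = -A (θ • v)`.
-/

open Real

section

variable {E : Type*} [NormedAddCommGroup E] [NormedSpace ℝ E]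

/-- `v, w` are `α`-eigenvectors of `A`, and on their span both `⟦u0, ·⟧` and `⟦·, A u0⟧` act as
infinitesimal rotations, with rates `ζ` and `λ α`. -/
structure IsRotatingPair (B : E →L[ℝ] E →L[ℝ] E) (A : E →L[ℝ] E) (u0 : E)
    (lam alpha zeta : ℝ) (v w : E) : Prop where
  apply_left : A v = alpha • v
  apply_right : A w = alpha • w
  bracket_left_apply : B v (A u0) = (lam * alpha) • w
  bracket_right_apply : B w (A u0) = -((lam * alpha) • v)
  bracket_apply_left : B u0 v = -(zeta • w)
  bracket_apply_right : B u0 w = zeta • v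

namespace IsRotatingPair

variable {B : E →L[ℝ] E →L[ℝ] E} {A : E →L[ℝ] E} {u0 v w : E} {lam alpha zeta : ℝ}

theorem rotate (h : IsRotatingPair B A u0 lam alpha zeta v w) (c s : ℝ) :
    IsRotatingPair B A u0 lam alpha zeta (c • v - s • w) (s • v + c • w) := by
  constructor <;>
  · simp only [map_add, map_sub, map_smul, add_apply, sub_apply, smul_apply, h.apply_left,
      h.apply_right, h.bracket_left_apply, h.bracket_right_apply, h.bracket_apply_left, h.bracket_apply_right]
    module

theorem linearized_eq (hB : ∀ x y : E, B x y = -B y x)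
    (h : IsRotatingPair B A u0 lam alpha zeta v w) :
    A ((lam - zeta) • v) = -B (u0 + v) (A w) - B w (A (u0 + v)) := by
  simp only [map_add, map_smul, add_apply, h.apply_left, h.apply_right,
    h.bracket_right_apply, h.bracket_apply_right, hB w v]
  module

end IsRotatingPair

theorem hasDerivAt_sin_smul_add_cos_smul (θ : ℝ) (v w : E) (t : ℝ) :
    HasDerivAt (fun s : ℝ => sin (θ * s) • v + cos (θ * s) • w)
      (θ • (cos (θ * t) • v - sin (θ * t) • w)) t := by
  have hθ : HasDerivAt (fun s : ℝ => θ * s) θ t := by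
    simpa using (hasDerivAt_id t).const_mul θ
  exact ((hθ.sin.smul_const v).add (hθ.cos.smul_const w)).congr_deriv (by module)

end

theorem statement2_general {E : Type*} [NormedAddCommGroup E] [NormedSpace ℝ E]
    (B : E →L[ℝ] E →L[ℝ] E) (hB : ∀ x y : E, B x y = -B y x)
    (A : E →L[ℝ] E) (u0 v w : E) (lam alpha zeta : ℝ)
    (h2 : A v = alpha • v)
    (h3 : A w = alpha • w)
    (h4 : B v (A u0) = (lam * alpha) • w)
    (h5 : B w (A u0) = -((lam * alpha) • v))
    (h6 : B u0 v = -(zeta • w))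
    (h7 : B u0 w = zeta • v) :
    ∀ t : ℝ,
      HasDerivAt
        (fun s : ℝ =>
          A (Real.sin ((lam - zeta) * s) • v + Real.cos ((lam - zeta) * s) • w))
        (-(B (u0 + Real.cos ((lam - zeta) * t) • v - Real.sin ((lam - zeta) * t) • w)
            (A (Real.sin ((lam - zeta) * t) • v + Real.cos ((lam - zeta) * t) • w)))
          - B (Real.sin ((lam - zeta) * t) • v + Real.cos ((lam - zeta) * t) • w)
              (A (u0 + Real.cos ((lam - zeta) * t) • v - Real.sin ((lam - zeta) * t) • w))) t := by
  intro t
  have hpair : IsRotatingPair B A u0 lam alpha zeta v w := ⟨h2, h3, h4, h5, h6, h7⟩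
  have hrotated := (hpair.rotate (cos ((lam - zeta) * t)) (sin ((lam - zeta) * t))).linearized_eq hB
  simp only [← add_sub_assoc] at hrotated
  rw [← hrotated]
  exact A.hasFDerivAt.comp_hasDerivAt t (hasDerivAt_sin_smul_add_cos_smul (lam - zeta) v w t)

/-- The linearized-solution part of Theorem 2.3 in abstract form.
With `U_R t = u0 + cos((λ-ζ)t) • v - sin((λ-ζ)t) • w` and
`U_I t = sin((λ-ζ)t) • v + cos((λ-ζ)t) • w`, the curve `U_I` satisfies the
linearized equation
`(d/dt)(A (U_I t)) + ⟦U_R t, A (U_I t)⟧ + ⟦U_I t, A (U_R t)⟧ = 0`. -/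
theorem statement2 {E : Type*} [NormedAddCommGroup E] [NormedSpace ℝ E]
    (B : E →L[ℝ] E →L[ℝ] E) (hB : ∀ x y : E, B x y = -B y x)
    (A : E →L[ℝ] E) (u0 v w : E) (lam alpha zeta : ℝ)
    (h1 : B u0 (A u0) = 0)
    (h2 : A v = alpha • v)
    (h3 : A w = alpha • w)
    (h4 : B v (A u0) = (lam * alpha) • w)
    (h5 : B w (A u0) = -((lam * alpha) • v))
    (h6 : B u0 v = -(zeta • w))
    (h7 : B u0 w = zeta • v) :
    ∀ t : ℝ,
      HasDerivAt
        (fun s : ℝ =>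
          A (Real.sin ((lam - zeta) * s) • v + Real.cos ((lam - zeta) * s) • w))
        (-(B (u0 + Real.cos ((lam - zeta) * t) • v - Real.sin ((lam - zeta) * t) • w)
            (A (Real.sin ((lam - zeta) * t) • v + Real.cos ((lam - zeta) * t) • w)))
          - B (Real.sin ((lam - zeta) * t) • v + Real.cos ((lam - zeta) * t) • w)
              (A (u0 + Real.cos ((lam - zeta) * t) • v - Real.sin ((lam - zeta) * t) • w))) t :=
  statement2_general B hB A u0 v w lam alpha zeta h2 h3 h4 h5 h6 h7
end

section
/- Fix integers n and m. Define u₁, u₂ : ℝ × ℝ × ℝ → ℝ by u₁(t,x,y) = 1 − m·sin(n(x−t)+my) and u₂(t,x,y) = n·sin(n(x−t)+my). Then at every point (t,x,y): (i) ∂_t u₁ + u₁·∂_x u₁ + u₂·∂_y u₁ = 0, (ii) ∂_t u₂ + u₁·∂_x u₂ + u₂·∂_y u₂ = 0, and (iii) ∂_x u₁ + ∂_y u₂ = 0. In other words, the vector field u = (u₁, u₂), which is 2π-periodic in x and y, is an exact smooth solution of the incompressible Euler equations ∂_t u + (u·∇)u = −∇p, div u = 0, with constant pressure p. -/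
/-- First component of the Kelvin wave on the flat two-torus. -/
noncomputable def kelvinU1 (n m : ℤ) (t x y : ℝ) : ℝ :=
  1 - (m : ℝ) * Real.sin ((n : ℝ) * (x - t) + (m : ℝ) * y)

/-- Second component of the Kelvin wave on the flat two-torus. -/
noncomputable def kelvinU2 (n m : ℤ) (t x y : ℝ) : ℝ :=
  (n : ℝ) * Real.sin ((n : ℝ) * (x - t) + (m : ℝ) * y)

/-! The Kelvin wave is a travelling plane wave `u = e + φ(k·x - ωt) a` with profile `φ = sin`,
wavevector `k = (n, m)`, amplitude `a = (-m, n) ⊥ k`, background flow `e = (1, 0)` and frequency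
`ω = n = k·e`. For such a wave `∂ₜu = -ω φ' a` and `(u·∇)u = (k·u) φ' a`, while `k·a = 0` gives
`k·u = k·e = ω`, so the two terms cancel; likewise `div u = (k·a) φ' = 0`. -/

def travellingWave (φ : ℝ → ℝ) (c a k₁ k₂ ω : ℝ) (t x y : ℝ) : ℝ :=
  c + a * φ (k₁ * x + k₂ * y - ω * t)

namespace travellingWave

variable {φ : ℝ → ℝ} {φ' : ℝ} {c a k₁ k₂ ω t x y : ℝ}

theorem hasDerivAt_t (hφ : HasDerivAt φ φ' (k₁ * x + k₂ * y - ω * t)) :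
    HasDerivAt (fun s => travellingWave φ c a k₁ k₂ ω s x y) (-(a * φ' * ω)) t := by
  have hθ : HasDerivAt (fun s => k₁ * x + k₂ * y - ω * s) (-ω) t := by
    simpa using ((hasDerivAt_id t).const_mul ω).const_sub (k₁ * x + k₂ * y)
  rw [show -(a * φ' * ω) = a * (φ' * -ω) by ring]
  exact ((hφ.comp t hθ).const_mul a).const_add c

theorem hasDerivAt_x (hφ : HasDerivAt φ φ' (k₁ * x + k₂ * y - ω * t)) :
    HasDerivAt (fun x' => travellingWave φ c a k₁ k₂ ω t x' y) (a * φ' * k₁) x := by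
  have hθ : HasDerivAt (fun x' => k₁ * x' + k₂ * y - ω * t) k₁ x := by
    simpa using (((hasDerivAt_id x).const_mul k₁).add_const (k₂ * y)).sub_const (ω * t)
  rw [mul_assoc]
  exact ((hφ.comp x hθ).const_mul a).const_add c

theorem hasDerivAt_y (hφ : HasDerivAt φ φ' (k₁ * x + k₂ * y - ω * t)) :
    HasDerivAt (fun y' => travellingWave φ c a k₁ k₂ ω t x y') (a * φ' * k₂) y := by
  have hθ : HasDerivAt (fun y' => k₁ * x + k₂ * y' - ω * t) k₂ y := by
    simpa using (((hasDerivAt_id y).const_mul k₂).const_add (k₁ * x)).sub_const (ω * t)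
  rw [mul_assoc]
  exact ((hφ.comp y hθ).const_mul a).const_add c

theorem materialDeriv_eq_zero (hφ : HasDerivAt φ φ' (k₁ * x + k₂ * y - ω * t)) {v₁ v₂ : ℝ}
    (hv : k₁ * v₁ + k₂ * v₂ = ω) :
    deriv (fun s => travellingWave φ c a k₁ k₂ ω s x y) t
      + v₁ * deriv (fun x' => travellingWave φ c a k₁ k₂ ω t x' y) x
      + v₂ * deriv (fun y' => travellingWave φ c a k₁ k₂ ω t x y') y = 0 := by
  rw [(hasDerivAt_t hφ).deriv, (hasDerivAt_x hφ).deriv, (hasDerivAt_y hφ).deriv]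
  linear_combination a * φ' * hv

theorem div_eq_zero {c₁ c₂ a₁ a₂ : ℝ} (hφ : HasDerivAt φ φ' (k₁ * x + k₂ * y - ω * t))
    (ha : k₁ * a₁ + k₂ * a₂ = 0) :
    deriv (fun x' => travellingWave φ c₁ a₁ k₁ k₂ ω t x' y) x
      + deriv (fun y' => travellingWave φ c₂ a₂ k₁ k₂ ω t x y') y = 0 := by
  rw [(hasDerivAt_x hφ).deriv, (hasDerivAt_y hφ).deriv]
  linear_combination φ' * ha

theorem dot_wavevector_eq {c₁ c₂ a₁ a₂ : ℝ} (ha : k₁ * a₁ + k₂ * a₂ = 0)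
    (hc : k₁ * c₁ + k₂ * c₂ = ω) :
    k₁ * travellingWave φ c₁ a₁ k₁ k₂ ω t x y
      + k₂ * travellingWave φ c₂ a₂ k₁ k₂ ω t x y = ω := by
  unfold travellingWave
  linear_combination hc + φ (k₁ * x + k₂ * y - ω * t) * ha

end travellingWave

theorem kelvinU1_eq_travellingWave (n m : ℤ) :
    kelvinU1 n m = travellingWave Real.sin 1 (-m) n m n := by
  ext t x y
  simp only [kelvinU1, travellingWave]
  ring_nf

theorem kelvinU2_eq_travellingWave (n m : ℤ) :
    kelvinU2 n m = travellingWave Real.sin 0 n n m n := by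
  ext t x y
  simp only [kelvinU2, travellingWave]
  ring_nf

/-- The Kelvin wave `u = (u₁, u₂)` with
`u₁(t,x,y) = 1 - m sin(n(x-t)+my)` and `u₂(t,x,y) = n sin(n(x-t)+my)` is an
exact solution of the incompressible Euler equations with constant pressure:
(i) `∂ₜu₁ + u₁ ∂ₓu₁ + u₂ ∂ᵧu₁ = 0`, (ii) `∂ₜu₂ + u₁ ∂ₓu₂ + u₂ ∂ᵧu₂ = 0`,
(iii) `∂ₓu₁ + ∂ᵧu₂ = 0` at every point `(t, x, y)`. -/
theorem statement7 (n m : ℤ) (t x y : ℝ) :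
    (deriv (fun s => kelvinU1 n m s x y) t
        + kelvinU1 n m t x y * deriv (fun a => kelvinU1 n m t a y) x
        + kelvinU2 n m t x y * deriv (fun b => kelvinU1 n m t x b) y = 0) ∧
    (deriv (fun s => kelvinU2 n m s x y) t
        + kelvinU1 n m t x y * deriv (fun a => kelvinU2 n m t a y) x
        + kelvinU2 n m t x y * deriv (fun b => kelvinU2 n m t x b) y = 0) ∧
    (deriv (fun a => kelvinU1 n m t a y) x + deriv (fun b => kelvinU2 n m t x b) y = 0) := by
  have hsin := Real.hasDerivAt_sin ((n : ℝ) * x + (m : ℝ) * y - (n : ℝ) * t)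
  have hu : (n : ℝ) * kelvinU1 n m t x y + (m : ℝ) * kelvinU2 n m t x y = n := by
    rw [kelvinU1_eq_travellingWave, kelvinU2_eq_travellingWave]
    exact travellingWave.dot_wavevector_eq (by ring) (by ring)
  rw [kelvinU1_eq_travellingWave, kelvinU2_eq_travellingWave] at hu ⊢
  exact ⟨travellingWave.materialDeriv_eq_zero hsin hu, travellingWave.materialDeriv_eq_zero hsin hu,
    travellingWave.div_eq_zero hsin (by ring)⟩
end

section
/- Define g : ℝ → ℝ by g(r) = √r·cos(3r/4). Then for every r > 0, g''(r) = g'(r)/r + (−3/(4r²) − 9/16)·g(r); moreover g(2π/3) = 0 and g(2π) = 0. -/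
/-!
Writing `g(r) = √r · h(r)` with `h = cos (k ·)`, the product rule gives
`g'' - g'/r = -3/(4r²) · g + √r · h''`, and `h'' = -k² h`; this is the Bessel equation of
order `1/2` in disguise. The boundary values are zeros of the cosine: `3r/4 = π/2` and `3π/2`.
-/

open Real Filter Topology

noncomputable section

def sqrtMulCosDeriv (k x : ℝ) : ℝ :=
  cos (k * x) / (2 * √x) - k * √x * sin (k * x)

theorem hasDerivAt_sqrt_mul_cos (k : ℝ) {x : ℝ} (hx : 0 < x) :
    HasDerivAt (fun x => √x * cos (k * x)) (sqrtMulCosDeriv k x) x := by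
  have hcos := ((hasDerivAt_id' x).const_mul k).cos
  refine ((hasDerivAt_sqrt hx.ne').mul hcos).congr_deriv ?_
  rw [sqrtMulCosDeriv]
  ring

theorem hasDerivAt_sqrtMulCosDeriv (k : ℝ) {x : ℝ} (hx : 0 < x) :
    HasDerivAt (sqrtMulCosDeriv k)
      (sqrtMulCosDeriv k x / x + (-3 / (4 * x ^ 2) - k ^ 2) * (√x * cos (k * x))) x := by
  have hsqrt := hasDerivAt_sqrt hx.ne'
  have hlin := (hasDerivAt_id' x).const_mul k
  have hterm₁ := hlin.cos.div (hsqrt.const_mul 2) (by positivity)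
  have hterm₂ := (hsqrt.const_mul k).mul hlin.sin
  refine (hterm₁.sub hterm₂).congr_deriv ?_
  have hsx : √x ≠ 0 := (sqrt_pos.2 hx).ne'
  rw [sqrtMulCosDeriv]
  -- with `x = s²` the identity becomes rational in `s`, which `field_simp` can clear
  generalize hs : √x = s at hsx
  obtain rfl : x = s * s := by rw [← hs, mul_self_sqrt hx.le]
  field_simp
  ring

theorem deriv_deriv_sqrt_mul_cos (k : ℝ) {r : ℝ} (hr : 0 < r) :
    deriv (deriv fun x => √x * cos (k * x)) r
      = deriv (fun x => √x * cos (k * x)) r / r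
        + (-3 / (4 * r ^ 2) - k ^ 2) * (√r * cos (k * r)) := by
  have hderiv : deriv (fun x => √x * cos (k * x)) =ᶠ[𝓝 r] sqrtMulCosDeriv k := by
    filter_upwards [eventually_gt_nhds hr] with x hx
    exact (hasDerivAt_sqrt_mul_cos k hx).deriv
  rw [hderiv.deriv_eq, (hasDerivAt_sqrtMulCosDeriv k hr).deriv,
    (hasDerivAt_sqrt_mul_cos k hr).deriv]

end

/-- The explicit radial solution of Example 4.6. The function
`g(r) = √r cos(3r/4)` satisfies `g'' = g'/r + (-3/(4r²) - 9/16) g` for `r > 0`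
and vanishes at `r = 2π/3` and `r = 2π`. -/
theorem statement10 :
    (∀ r : ℝ, 0 < r →
        deriv (deriv (fun x : ℝ => Real.sqrt x * Real.cos (3 * x / 4))) r
          = deriv (fun x : ℝ => Real.sqrt x * Real.cos (3 * x / 4)) r / r
            + (-3 / (4 * r ^ 2) - 9 / 16) * (Real.sqrt r * Real.cos (3 * r / 4))) ∧
    Real.sqrt (2 * Real.pi / 3) * Real.cos (3 * (2 * Real.pi / 3) / 4) = 0 ∧
    Real.sqrt (2 * Real.pi) * Real.cos (3 * (2 * Real.pi) / 4) = 0 := by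
  refine ⟨fun r hr => ?_, ?_, ?_⟩
  · have hk : ∀ x : ℝ, 3 * x / 4 = 3 / 4 * x := fun x => by ring
    simp only [hk]
    convert deriv_deriv_sqrt_mul_cos (3 / 4) hr using 3
    norm_num
  · rw [cos_eq_zero_iff.mpr ⟨0, by ring⟩, mul_zero]
  · rw [cos_eq_zero_iff.mpr ⟨1, by push_cast; ring⟩, mul_zero]
end

section
/- Let g be a finite-dimensional real Lie algebra equipped with an inner product ⟨·,·⟩; for u ∈ g let ad_u : g → g denote v ↦ ⁅u,v⁆ and ad*_u its adjoint with respect to ⟨·,·⟩. Let X ∈ g satisfy ad*_X = −ad_X, and let Φ(t) := exp(t·ad_X) denote the operator exponential on g. Let V : ℝ → g be differentiable and define U(t) := X + Φ(t)(V(t)). Then U satisfies the Euler–Arnold equation U'(t) = −ad*_{U(t)} U(t) for all t ∈ ℝ if and only if V satisfies V'(t) = −ad*_{V(t)} V(t) − ad*_{V(t)} X for all t ∈ ℝ. -/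
/-!
`Φ(t) = exp (t ad_X)` is the flow of the linear equation `h' = ad_X h`, so uniqueness for that
equation shows that `Φ(t)` fixes `X` and, `ad_X` being a derivation of the bracket (Jacobi), that
`Φ(t)` is a Lie algebra automorphism. Since `ad_X` is skew-adjoint, `Φ(t)` is moreover orthogonal,
hence intertwines the coadjoint operators: `ad*_{Φ w} (Φ z) = Φ (ad*_w z)`. Expanding with
`U = X + Φ V` gives `-ad*_U U = ad_X (Φ V) + Φ (-ad*_V V - ad*_V X)`, while
`U' = ad_X (Φ V) + Φ V'`; as `Φ(t)` is invertible, the two equations are equivalent.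
-/

open scoped RealInnerProductSpace

variable {g : Type*} [NormedAddCommGroup g] [InnerProductSpace ℝ g] [FiniteDimensional ℝ g]

/-- The adjoint operator `ad_u : v ↦ ⁅u, v⁆` of a Lie bracket `br`, as a
continuous linear map on the finite-dimensional space `g`. -/
noncomputable def adOp (br : g →ₗ[ℝ] g →ₗ[ℝ] g) (u : g) : g →L[ℝ] g :=
  LinearMap.toContinuousLinearMap (br u)

/-- The coadjoint operator `ad*_u`, the adjoint of `ad_u` with respect to the
inner product. -/
noncomputable def adStarOp (br : g →ₗ[ℝ] g →ₗ[ℝ] g) (u : g) : g →L[ℝ] g :=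
  ContinuousLinearMap.adjoint (adOp br u)

/-- The operator exponential `Φ(t) = exp(t ad_X)`. -/
noncomputable def phiExp (br : g →ₗ[ℝ] g →ₗ[ℝ] g) (X : g) (t : ℝ) : g →L[ℝ] g :=
  NormedSpace.exp (t • adOp br X)

open NormedSpace ContinuousLinearMap

section ExpFlow

variable {E : Type*} [NormedAddCommGroup E] [NormedSpace ℝ E] [CompleteSpace E]

theorem exp_smul_mul_exp_neg_smul (D : E →L[ℝ] E) (t : ℝ) :
    exp (t • D) * exp ((-t) • D) = 1 := by
  let := NormedAlgebra.restrictScalars ℚ ℝ (E →L[ℝ] E)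
  rw [← exp_add_of_commute ((Commute.refl D).smul_left t |>.smul_right (-t)), ← add_smul,
    add_neg_cancel, zero_smul, exp_zero]

theorem exp_smul_apply_exp_neg_smul_apply (D : E →L[ℝ] E) (t : ℝ) (v : E) :
    exp (t • D) (exp ((-t) • D) v) = v := by
  change (exp (t • D) * exp ((-t) • D)) v = v
  rw [exp_smul_mul_exp_neg_smul, one_apply_eq_self]

theorem exp_smul_injective (D : E →L[ℝ] E) (t : ℝ) :
    Function.Injective (exp (t • D) : E →L[ℝ] E) :=
  Function.LeftInverse.injective (g := (exp ((-t) • D) : E →L[ℝ] E)) fun v => by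
    simpa using exp_smul_apply_exp_neg_smul_apply D (-t) v

theorem hasDerivAt_exp_smul_apply {D : E →L[ℝ] E} {V : ℝ → E} {v' : E} {t : ℝ}
    (hV : HasDerivAt V v' t) :
    HasDerivAt (fun s => exp (s • D) (V s)) (D (exp (t • D) (V t)) + exp (t • D) v') t := by
  simpa using (hasDerivAt_exp_smul_const' D t).clm_apply hV

-- `s ↦ exp (-s • D) (h s)` has derivative zero.
theorem eq_exp_smul_apply_of_hasDerivAt {D : E →L[ℝ] E} {h : ℝ → E}
    (hh : ∀ s, HasDerivAt h (D (h s)) s) (t : ℝ) : h t = exp (t • D) (h 0) := by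
  set G : ℝ → E := fun s => exp ((-s) • D) (h s)
  have hG : ∀ s, HasDerivAt G 0 s := by
    intro s
    have hexp : HasDerivAt (fun u : ℝ => exp ((-u) • D)) (-(exp ((-s) • D) * D)) s := by
      simpa [Function.comp_def] using
        (hasDerivAt_exp_smul_const D (-s)).scomp s (hasDerivAt_neg s)
    convert hexp.clm_apply (hh s) using 1
    simp
  have hconst : G t = G 0 :=
    is_const_of_deriv_eq_zero (fun s => (hG s).differentiableAt) (fun s => (hG s).deriv) t 0
  calc h t = exp (t • D) (G t) := (exp_smul_apply_exp_neg_smul_apply D t (h t)).symm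
    _ = exp (t • D) (h 0) := by rw [hconst]; simp [G]

theorem exp_smul_apply_of_apply_eq_zero {D : E →L[ℝ] E} {v : E} (hv : D v = 0) (t : ℝ) :
    exp (t • D) v = v := by
  have hconst (s : ℝ) : HasDerivAt (fun _ => v) (D v) s := hv ▸ hasDerivAt_const s v
  exact (eq_exp_smul_apply_of_hasDerivAt hconst t).symm

theorem exp_smul_apply_of_derivation (B : E →L[ℝ] E →L[ℝ] E) {D : E →L[ℝ] E}
    (hD : ∀ a b, D (B a b) = B (D a) b + B a (D b)) (t : ℝ) (a b : E) :
    exp (t • D) (B a b) = B (exp (t • D) a) (exp (t • D) b) := by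
  have hflow (s : ℝ) : HasDerivAt (fun s => B (exp (s • D) a) (exp (s • D) b))
      (D (B (exp (s • D) a) (exp (s • D) b))) s := by
    have ha := hasDerivAt_exp_smul_apply (D := D) (hasDerivAt_const s a)
    have hb := hasDerivAt_exp_smul_apply (D := D) (hasDerivAt_const s b)
    simpa [hD, add_comm] using (B.hasFDerivAt.comp_hasDerivAt s ha).clm_apply hb
  simpa using (eq_exp_smul_apply_of_hasDerivAt hflow t).symm

theorem hasDerivAt_const_add_exp_smul_apply_iff {D : E →L[ℝ] E} {V : ℝ → E} {t : ℝ}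
    (hV : DifferentiableAt ℝ V t) (c v' : E) :
    HasDerivAt (fun s => c + exp (s • D) (V s)) (D (exp (t • D) (V t)) + exp (t • D) v') t ↔
      HasDerivAt V v' t := by
  rw [hasDerivAt_const_add_iff]
  refine ⟨fun h => ?_, hasDerivAt_exp_smul_apply⟩
  have hderiv := add_left_cancel (h.unique (hasDerivAt_exp_smul_apply hV.hasDerivAt))
  exact exp_smul_injective D t hderiv ▸ hV.hasDerivAt

end ExpFlow

theorem exp_smul_mem_unitary_of_star_eq_neg {𝔸 : Type*} [NormedRing 𝔸] [NormedAlgebra ℝ 𝔸]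
    [CompleteSpace 𝔸] [StarRing 𝔸] [ContinuousStar 𝔸] [StarModule ℝ 𝔸] {D : 𝔸}
    (hD : star D = -D) (t : ℝ) : exp (t • D) ∈ unitary 𝔸 := by
  let := NormedAlgebra.restrictScalars ℚ ℝ 𝔸
  exact exp_mem_unitary_of_mem_skewAdjoint (skewAdjoint.smul_mem t (skewAdjoint.mem_iff.2 hD))

section Coadjoint

variable (br : g →ₗ[ℝ] g →ₗ[ℝ] g)

theorem adOp_apply (u v : g) : adOp br u v = br u v := rfl

noncomputable def brCLM : g →L[ℝ] g →L[ℝ] g :=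
  LinearMap.toContinuousLinearMap (LinearMap.toContinuousLinearMap.toLinearMap ∘ₗ br)

theorem adStarOp_add (u v : g) : adStarOp br (u + v) = adStarOp br u + adStarOp br v := by
  simp [adStarOp, adOp, map_add]

variable {br}

theorem adOp_self (hanti : ∀ x y : g, br x y = -br y x) (X : g) : adOp br X X = 0 := by
  rw [adOp_apply]; linear_combination (norm := module) (2⁻¹ : ℝ) • hanti X X

theorem adOp_apply_bracket (hanti : ∀ x y : g, br x y = -br y x)
    (hjacobi : ∀ x y z : g, br (br x y) z + br (br y z) x + br (br z x) y = 0) (X a b : g) :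
    adOp br X (br a b) = br (adOp br X a) b + br a (adOp br X b) := by
  have hj := hjacobi X a b
  rw [hanti (br a b) X, hanti (br b X) a, hanti b X, map_neg, neg_neg] at hj
  simp only [adOp_apply]
  linear_combination (norm := module) -hj

theorem adOp_map_of_mem_unitary {Φ : g →L[ℝ] g} (hΦ : Φ ∈ unitary (g →L[ℝ] g))
    (hbr : ∀ a b, Φ (br a b) = br (Φ a) (Φ b)) (w : g) :
    adOp br (Φ w) = Φ * adOp br w * star Φ := by
  ext y
  have hy : Φ (star Φ y) = y := by
    change (Φ * star Φ) y = y
    rw [Unitary.mul_star_self_of_mem hΦ, one_apply_eq_self]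
  simp [adOp_apply, hbr, hy]

theorem adStarOp_map_apply_map_of_mem_unitary {Φ : g →L[ℝ] g} (hΦ : Φ ∈ unitary (g →L[ℝ] g))
    (hbr : ∀ a b, Φ (br a b) = br (Φ a) (Φ b)) (w z : g) :
    adStarOp br (Φ w) (Φ z) = Φ (adStarOp br w z) := by
  have hz : star Φ (Φ z) = z := by
    change (star Φ * Φ) z = z
    rw [Unitary.star_mul_self_of_mem hΦ, one_apply_eq_self]
  rw [adStarOp, ← star_eq_adjoint, adOp_map_of_mem_unitary hΦ hbr, star_mul, star_mul, star_star]
  change Φ (star (adOp br w) (star Φ (Φ z))) = _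
  rw [hz, star_eq_adjoint]
  rfl

theorem phiExp_apply_bracket (hanti : ∀ x y : g, br x y = -br y x)
    (hjacobi : ∀ x y z : g, br (br x y) z + br (br y z) x + br (br z x) y = 0) (X : g) (t : ℝ)
    (a b : g) : phiExp br X t (br a b) = br (phiExp br X t a) (phiExp br X t b) :=
  exp_smul_apply_of_derivation (brCLM br) (adOp_apply_bracket hanti hjacobi X) t a b

theorem phiExp_apply_self (hanti : ∀ x y : g, br x y = -br y x) (X : g) (t : ℝ) :
    phiExp br X t X = X :=
  exp_smul_apply_of_apply_eq_zero (adOp_self hanti X) t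

theorem phiExp_mem_unitary {X : g} (hX : adStarOp br X = -adOp br X) (t : ℝ) :
    phiExp br X t ∈ unitary (g →L[ℝ] g) :=
  exp_smul_mem_unitary_of_star_eq_neg (by rw [star_eq_adjoint]; exact hX) t

theorem neg_adStarOp_add_phiExp (hanti : ∀ x y : g, br x y = -br y x)
    (hjacobi : ∀ x y z : g, br (br x y) z + br (br y z) x + br (br z x) y = 0) {X : g}
    (hX : adStarOp br X = -adOp br X) (t : ℝ) (v : g) :
    -adStarOp br (X + phiExp br X t v) (X + phiExp br X t v) =
      adOp br X (phiExp br X t v) + phiExp br X t (-adStarOp br v v - adStarOp br v X) := by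
  have hXX : adStarOp br X X = 0 := by rw [hX, neg_apply, adOp_self hanti, neg_zero]
  have hXΦ : adStarOp br X (phiExp br X t v) = -adOp br X (phiExp br X t v) := by rw [hX]; rfl
  have hΦ := adStarOp_map_apply_map_of_mem_unitary (phiExp_mem_unitary hX t)
    (phiExp_apply_bracket hanti hjacobi X t)
  have hΦX : adStarOp br (phiExp br X t v) X = phiExp br X t (adStarOp br v X) := by
    rw [← hΦ, phiExp_apply_self hanti]
  rw [adStarOp_add, add_apply, map_add, map_add, hXX, hXΦ, hΦX, hΦ, map_sub, map_neg]
  abel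

end Coadjoint

/-- The Euler/Euler–Coriolis correspondence (Theorem 5.1) in the
finite-dimensional real Lie algebra setting. Here the Lie algebra is a
finite-dimensional real inner product space `g` equipped with a bilinear
bracket `br` that is antisymmetric and satisfies the Jacobi identity. With
`ad*_X = -ad_X` and `U(t) = X + exp(t ad_X)(V(t))`, the curve `U` satisfies
the Euler–Arnold equation `U' = -ad*_U U` if and only if `V` satisfies
`V' = -ad*_V V - ad*_V X`. -/
theorem statement11 (br : g →ₗ[ℝ] g →ₗ[ℝ] g)
    (hanti : ∀ x y : g, br x y = -br y x)
    (hjacobi : ∀ x y z : g, br (br x y) z + br (br y z) x + br (br z x) y = 0)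
    (X : g) (hX : adStarOp br X = -adOp br X)
    (V : ℝ → g) (hV : Differentiable ℝ V) :
    (∀ t : ℝ,
        HasDerivAt (fun s : ℝ => X + phiExp br X s (V s))
          (-(adStarOp br (X + phiExp br X t (V t)) (X + phiExp br X t (V t)))) t)
      ↔ (∀ t : ℝ,
        HasDerivAt V (-(adStarOp br (V t) (V t)) - adStarOp br (V t) X) t) := by
  refine forall_congr' fun t => ?_
  rw [neg_adStarOp_add_phiExp hanti hjacobi hX t (V t)]
  exact hasDerivAt_const_add_exp_smul_apply_iff (hV t) X _
end
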